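/- arXiv:2604.21808 — 2 statements merged into one kernel-verified Lean document; each statement's English description precedes it below -/
import Mathlib

section
/- Let v ∈ (rQ/2, (r+1)Q/2) with Q = q-1, and suppose m ≥ r+1. If the projective inner product ⟨ev(X^a), ev(X^b)⟩ of two degree-v monomials is nonzero, then a_i = b_i = 0 for every index i < m - r. -/
/-- The sum of the monomial with exponent vector `c` over the standard
representatives of the points of `ℙ^m(F)` (vectors whose first nonzero
coordinate equals `1`). -/
def projSum (F : Type*) [Field F] [Fintype F] [DecidableEq F] (m : ℕ)
    (c : Fin (m + 1) → ℕ) : F :=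
  ∑ p ∈ Finset.univ.filter
      (fun p : Fin (m + 1) → F => ∃ j, p j = 1 ∧ ∀ i, i < j → p i = 0),
    ∏ i, p i ^ c i

/-!
Split the standard representatives according to the position `j` of their leading `1`: those
with pivot `j` form a box `{0}^j × {1} × F^(m-j)`, so `projSum` becomes a sum over `j` of products
of one-variable power sums. A nonzero term has `c i = 0` before the pivot and, after it,
`∑ x : F, x ^ c i ≠ 0`, which forces `c i ≥ q - 1`. With `c = a + b` of total degree
`2v < (r + 1)(q - 1)` there are at most `r` coordinates after the pivot, so the pivot is at
least `m - r` and all earlier coordinates of `a` and `b` vanish.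
-/

open Finset

section Pivot

variable {F : Type*} [Zero F] [One F] [Fintype F] {m : ℕ}

def pivotBox (j i : Fin (m + 1)) : Finset F :=
  if i < j then {0} else if i = j then {1} else univ

theorem mem_piFinset_pivotBox {j : Fin (m + 1)} {p : Fin (m + 1) → F} :
    p ∈ Fintype.piFinset (pivotBox j) ↔ p j = 1 ∧ ∀ i, i < j → p i = 0 := by
  simp only [Fintype.mem_piFinset, pivotBox]
  constructor
  · intro h
    refine ⟨by simpa using h j, fun i hi => ?_⟩
    simpa [if_pos hi] using h i
  · rintro ⟨hj, hlt⟩ i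
    split_ifs with hi hij
    · simp [hlt i hi]
    · simp [hij, hj]
    · exact mem_univ _

theorem pairwiseDisjoint_piFinset_pivotBox [NeZero (1 : F)] :
    ((univ : Finset (Fin (m + 1))) : Set (Fin (m + 1))).PairwiseDisjoint
      (fun j => Fintype.piFinset (pivotBox (F := F) j)) := by
  intro j _ k _ hjk
  refine disjoint_left.mpr fun p hpj hpk => ?_
  rw [mem_piFinset_pivotBox] at hpj hpk
  rcases hjk.lt_or_gt with h | h
  · exact one_ne_zero (hpj.1 ▸ hpk.2 j h)
  · exact one_ne_zero (hpk.1 ▸ hpj.2 k h)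

end Pivot

theorem FiniteField.card_sub_one_le_of_sum_pow_ne_zero {F : Type*} [Field F] [Fintype F]
    {N : ℕ} (h : ∑ x : F, x ^ N ≠ 0) : Fintype.card F - 1 ≤ N :=
  not_lt.mp fun hN => h (sum_pow_lt_card_sub_one F N hN)

section ProjSum

variable {F : Type*} [Field F] [Fintype F] [DecidableEq F] {m : ℕ}

theorem projSum_eq_sum_prod_sum_pivotBox (c : Fin (m + 1) → ℕ) :
    projSum F m c = ∑ j, ∏ i, ∑ x ∈ pivotBox j i, x ^ c i := by
  have hreps : univ.filter (fun p : Fin (m + 1) → F => ∃ j, p j = 1 ∧ ∀ i, i < j → p i = 0) =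
      univ.biUnion (fun j => Fintype.piFinset (pivotBox j)) := by
    ext p
    simp only [mem_filter, mem_univ, true_and, mem_biUnion, mem_piFinset_pivotBox]
  rw [projSum, hreps, sum_biUnion pairwiseDisjoint_piFinset_pivotBox]
  exact sum_congr rfl fun j _ => (prod_univ_sum _ _).symm

theorem exists_pivot_of_projSum_ne_zero {c : Fin (m + 1) → ℕ} (hne : projSum F m c ≠ 0) :
    ∃ j : Fin (m + 1), (∀ i, i < j → c i = 0) ∧ ∀ i, j < i → Fintype.card F - 1 ≤ c i := by
  rw [projSum_eq_sum_prod_sum_pivotBox] at hne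
  obtain ⟨j, -, hj⟩ := exists_ne_zero_of_sum_ne_zero hne
  have hfactor : ∀ i, ∑ x ∈ pivotBox j i, (x : F) ^ c i ≠ 0 := fun i hi =>
    hj (prod_eq_zero (mem_univ i) hi)
  refine ⟨j, fun i hi => ?_, fun i hi => ?_⟩
  · have := hfactor i
    simp only [pivotBox, if_pos hi, sum_singleton] at this
    exact not_not.mp fun hc => this (zero_pow hc)
  · have := hfactor i
    simp only [pivotBox, if_neg hi.not_gt, if_neg hi.ne'] at this
    exact FiniteField.card_sub_one_le_of_sum_pow_ne_zero this

end ProjSum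

theorem Fin.sub_mul_le_sum {m Q : ℕ} {c : Fin (m + 1) → ℕ} {j : Fin (m + 1)}
    (hc : ∀ i, j < i → Q ≤ c i) : (m - j) * Q ≤ ∑ i, c i :=
  calc (m - j) * Q = #(Ioi j) • Q := by rw [Fin.card_Ioi, smul_eq_mul, Nat.add_sub_cancel]
    _ ≤ ∑ i ∈ Ioi j, c i := card_nsmul_le_sum _ _ _ fun i hi => hc i (mem_Ioi.mp hi)
    _ ≤ ∑ i, c i := sum_le_sum_of_subset (subset_univ _)

theorem projSum_support_general (F : Type*) [Field F] [Fintype F] [DecidableEq F]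
    (q r v m : ℕ) (hq : Fintype.card F = q)
    (h2 : 2 * v < (r + 1) * (q - 1))
    (a b : Fin (m + 1) → ℕ) (hav : ∑ i, a i = v) (hbv : ∑ i, b i = v)
    (hne : projSum F m (fun i => a i + b i) ≠ 0) :
    ∀ i : Fin (m + 1), (i : ℕ) < m - r → a i = 0 ∧ b i = 0 := by
  obtain ⟨j, hbefore, hafter⟩ := exists_pivot_of_projSum_ne_zero hne
  have hdeg : ∑ i, (a i + b i) = 2 * v := by rw [sum_add_distrib, hav, hbv, two_mul]
  have hcount : (m - j) * (q - 1) < (r + 1) * (q - 1) :=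
    (hdeg ▸ Fin.sub_mul_le_sum (hq ▸ hafter)).trans_lt h2
  have hpivot : m - r ≤ j := by
    have := Nat.lt_of_mul_lt_mul_right hcount
    omega
  intro i hi
  have := hbefore i (Fin.lt_def.mpr (by omega))
  omega

/-- Support theorem: if `v` lies in the open interval `(rQ/2, (r+1)Q/2)` and
`m ≥ r + 1`, then a nonzero projective inner product of two degree-`v` monomials
forces `a_i = b_i = 0` for every `i < m - r`. -/
theorem projSum_support (F : Type*) [Field F] [Fintype F] [DecidableEq F]
    (q r v m : ℕ) (hq : Fintype.card F = q) (hm : r + 1 ≤ m)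
    (h1 : r * (q - 1) < 2 * v) (h2 : 2 * v < (r + 1) * (q - 1))
    (a b : Fin (m + 1) → ℕ) (hav : ∑ i, a i = v) (hbv : ∑ i, b i = v)
    (hne : projSum F m (fun i => a i + b i) ≠ 0) :
    ∀ i : Fin (m + 1), (i : ℕ) < m - r → a i = 0 ∧ b i = 0 :=
  projSum_support_general F q r v m hq h2 a b hav hbv hne
end

section
/- With notation as in the top-layer matrix: the A_r(v) × A_r(v) matrix P, with layers ordered by increasing |a| (and |b|), is block lower triangular with all diagonal blocks equal to (-1)^r times an identity matrix, and its only possible nonzero off-diagonal block is the corner block from layer |a| = U to layer |b| = L; consequently P is invertible, i.e. rank(P) = A_r(v). -/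
/-- The entry of the top-layer matrix at `(a, b)`: the projective inner product
`⟨ev(M_a), ev(M_{b̄})⟩` over `ℙ^r(F_q)`, where `M_a = z_0^{v-|a|} z_1^{a_1} ⋯ z_r^{a_r}`
and `b̄ = (Q - b_1, …, Q - b_r)`, `Q = q - 1`, `L = rQ - v`. -/
def topEntry (F : Type*) [Field F] [Fintype F] [DecidableEq F]
    (q r v : ℕ) (a b : Fin r → ℕ) : F :=
  projSum F r (fun i =>
    (Fin.cons (v - ∑ j, a j) a : Fin (r + 1) → ℕ) i +
      (Fin.cons ((∑ j, b j) - (r * (q - 1) - v)) (fun j => (q - 1) - b j) :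
        Fin (r + 1) → ℕ) i)

/-- The index set of the top layer: tuples `a ∈ {0,…,q-1}^r` with
`L ≤ |a| ≤ U`, where `L = r(q-1) - v` and `U = v`; its cardinality is `A_r(v)`. -/
def topIndex (q r v : ℕ) : Type :=
  {a : Fin r → Fin q // r * (q - 1) - v ≤ ∑ i, (a i : ℕ) ∧ ∑ i, (a i : ℕ) ≤ v}

instance (q r v : ℕ) : Fintype (topIndex q r v) := by
  unfold topIndex; infer_instance

instance (q r v : ℕ) : DecidableEq (topIndex q r v) := by
  unfold topIndex; infer_instance

/-!
Off the corner `|a| = U`, `|b| = L` the exponent `(v - |a|) + (|b| - L)` of `z_0` is positive, so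
only representatives with leading coordinate `1` contribute and the entry factors as
`∏ k, ∑ x : F, x ^ (a k + (Q - b k))`. A power sum over `F` is `-1` at positive multiples of `Q`
and `0` elsewhere, so a factor survives only if `a k = b k` or `b k + Q ≤ a k`. This gives the
diagonal `(-1)^r`, and forces `|b| + Q ≤ |a|` for a nonzero off-diagonal entry, which the
bounds `L ≤ |b|`, `|a| ≤ U < L + Q` exclude outside the corner. Hence `P - (-1)^r • 1` maps
layer `U` into layer `L` only, squares to zero, and `P` is a unit.
-/

open Finset

theorem FiniteField.sum_pow (F : Type*) [Field F] [Fintype F] [DecidableEq F] (n : ℕ) :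
    ∑ x : F, x ^ n = if n ≠ 0 ∧ Fintype.card F - 1 ∣ n then -1 else 0 := by
  rcases eq_or_ne n 0 with rfl | hn
  · simp
  rw [if_congr (and_iff_right hn) rfl rfl, ← FiniteField.sum_pow_units,
    ← (unitsEquivNeZero (G₀ := F)).symm.sum_comp, ← Finset.sum_erase _ (zero_pow hn)]
  exact Finset.sum_subtype _ (by simp) (fun x : F => x ^ n)

theorem Nat.eq_or_add_le_of_dvd_add_tsub {Q a b : ℕ} (hb : b ≤ Q) (h0 : a + (Q - b) ≠ 0)
    (hdvd : Q ∣ a + (Q - b)) : a = b ∨ b + Q ≤ a := by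
  obtain ⟨t, ht⟩ := hdvd
  rcases Nat.lt_or_ge t 2 with h | h
  · interval_cases t <;> omega
  · have := Nat.mul_le_mul_left Q h
    omega

theorem FiniteField.eq_or_add_le_of_sum_pow_ne_zero {F : Type*} [Field F] [Fintype F]
    [DecidableEq F] {a b : ℕ} (hb : b ≤ Fintype.card F - 1)
    (h : ∑ x : F, x ^ (a + (Fintype.card F - 1 - b)) ≠ 0) :
    a = b ∨ b + (Fintype.card F - 1) ≤ a := by
  rw [FiniteField.sum_pow] at h
  split_ifs at h with hn
  · exact Nat.eq_or_add_le_of_dvd_add_tsub hb hn.1 hn.2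
  · exact absurd rfl h

theorem Finset.sum_add_le_sum_of_add_le {ι M : Type*} [AddCommMonoid M] [PartialOrder M]
    [IsOrderedAddMonoid M] {s : Finset ι} {f g : ι → M} {c : M} {k : ι} (hk : k ∈ s)
    (hle : ∀ i ∈ s, f i ≤ g i) (hkc : f k + c ≤ g k) : ∑ i ∈ s, f i + c ≤ ∑ i ∈ s, g i := by
  classical
  rw [← add_sum_erase s f hk, ← add_sum_erase s g hk, add_right_comm]
  exact add_le_add hkc (sum_le_sum fun i hi => hle i (mem_of_mem_erase hi))

theorem Matrix.isUnit_of_diag_eq_of_offDiag_support {n R : Type*} [Fintype n] [DecidableEq n]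
    [CommRing R] (M : Matrix n n R) {d : R} (hd : IsUnit d) (p : n → Prop)
    (hdiag : ∀ i, M i i = d) (hoff : ∀ i j, i ≠ j → M i j ≠ 0 → p i ∧ ¬ p j) : IsUnit M := by
  set N := M - d • 1 with hN
  have hNsupp : ∀ i j, N i j ≠ 0 → p i ∧ ¬ p j := by
    intro i j h
    rcases eq_or_ne i j with rfl | hij
    · simp [hN, hdiag] at h
    · exact hoff i j hij (by simpa [hN, Matrix.one_apply_ne hij] using h)
  have hN2 : N * N = 0 := by
    ext i j
    refine Finset.sum_eq_zero fun k _ => ?_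
    by_contra h
    exact (hNsupp i k (left_ne_zero_of_mul h)).2 (hNsupp k j (right_ne_zero_of_mul h)).1
  rw [← add_sub_cancel (d • (1 : Matrix n n R)) M]
  refine IsNilpotent.isUnit_add_left_of_commute ⟨2, by rw [sq, hN2]⟩ ?_
    ((Commute.one_right N).smul_right d)
  simpa [Algebra.algebraMap_eq_smul_one] using hd.map (algebraMap R (Matrix n n R))

theorem projSum_eq_prod_of_ne_zero (F : Type*) [Field F] [Fintype F] [DecidableEq F] (m : ℕ)
    (c : Fin (m + 1) → ℕ) (hc : c 0 ≠ 0) :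
    projSum F m c = ∏ i : Fin m, ∑ x : F, x ^ c i.succ := by
  have hsub : univ.image (fun t : Fin m → F => (Fin.cons 1 t : Fin (m + 1) → F)) ⊆
      univ.filter (fun p : Fin (m + 1) → F => ∃ j, p j = 1 ∧ ∀ i, i < j → p i = 0) := by
    intro p hp
    obtain ⟨t, -, rfl⟩ := mem_image.1 hp
    exact mem_filter.2 ⟨mem_univ _, 0, by simp, fun i hi => absurd hi (Fin.not_lt_zero i)⟩
  rw [projSum, ← sum_subset hsub, sum_image fun _ _ _ _ h => Fin.cons_right_injective _ h,
    Fintype.prod_sum]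
  · simp [Fin.prod_univ_succ]
  · intro p hp hnot
    obtain ⟨j, hj1, hj0⟩ := (mem_filter.1 hp).2
    have hj : j ≠ 0 := by
      rintro rfl
      exact hnot (mem_image.2 ⟨Fin.tail p, mem_univ _, by rw [← hj1, Fin.cons_self_tail]⟩)
    exact prod_eq_zero (mem_univ 0) (by rw [hj0 0 (Fin.pos_of_ne_zero hj), zero_pow hc])

theorem topEntry_eq_prod (F : Type*) [Field F] [Fintype F] [DecidableEq F] (q r v : ℕ)
    (a b : Fin r → ℕ) (h : (v - ∑ j, a j) + ((∑ j, b j) - (r * (q - 1) - v)) ≠ 0) :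
    topEntry F q r v a b = ∏ k, ∑ x : F, x ^ (a k + ((q - 1) - b k)) := by
  rw [topEntry, projSum_eq_prod_of_ne_zero _ _ _ (by simpa using h)]
  simp

theorem topEntry_self (F : Type*) [Field F] [Fintype F] [DecidableEq F] (q r v : ℕ)
    (hq : Fintype.card F = q) (h1 : r * (q - 1) < 2 * v) (x : topIndex q r v) :
    topEntry F q r v (fun i => (x.1 i : ℕ)) (fun i => (x.1 i : ℕ)) = (-1 : F) ^ r := by
  subst hq
  obtain ⟨hL, hU⟩ := x.2
  have hq : 1 < Fintype.card F := Fintype.one_lt_card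
  have hcoord : ∀ k, (x.1 k : ℕ) + (Fintype.card F - 1 - x.1 k) = Fintype.card F - 1 :=
    fun k => by have := (x.1 k).isLt; omega
  rw [topEntry_eq_prod _ _ _ _ _ _ (by omega)]
  simp only [hcoord, FiniteField.sum_pow, dvd_refl, and_true, prod_const, card_univ,
    Fintype.card_fin]
  rw [if_pos (by omega)]

theorem corner_of_topEntry_ne_zero (F : Type*) [Field F] [Fintype F] [DecidableEq F]
    (q r v : ℕ) (hq : Fintype.card F = q) (h2 : 2 * v < (r + 1) * (q - 1)) (x y : topIndex q r v)
    (hxy : x ≠ y)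
    (hne : topEntry F q r v (fun i => (x.1 i : ℕ)) (fun i => (y.1 i : ℕ)) ≠ 0) :
    ∑ i, (x.1 i : ℕ) = v ∧ ∑ i, (y.1 i : ℕ) = r * (q - 1) - v := by
  subst hq
  by_contra hcorner
  obtain ⟨hLx, hUx⟩ := x.2
  obtain ⟨hLy, hUy⟩ := y.2
  rw [topEntry_eq_prod _ _ _ _ _ _ (by omega)] at hne
  have hcoord : ∀ k, (x.1 k : ℕ) = y.1 k ∨ (y.1 k : ℕ) + (Fintype.card F - 1) ≤ x.1 k :=
    fun k => FiniteField.eq_or_add_le_of_sum_pow_ne_zero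
      (by have := (y.1 k).isLt; omega) (prod_ne_zero_iff.1 hne k (mem_univ k))
  obtain ⟨k, hk⟩ : ∃ k, (x.1 k : ℕ) ≠ y.1 k := by
    by_contra! h
    exact hxy (Subtype.ext (funext fun k => Fin.ext (h k)))
  have hsum : ∑ i, (y.1 i : ℕ) + (Fintype.card F - 1) ≤ ∑ i, (x.1 i : ℕ) :=
    sum_add_le_sum_of_add_le (mem_univ k) (fun i _ => by rcases hcoord i with h | h <;> omega)
      ((hcoord k).resolve_left hk)
  rw [add_one_mul] at h2
  omega

theorem topMatrix_invertible_general (F : Type*) [Field F] [Fintype F] [DecidableEq F]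
    (q r v : ℕ) (hq : Fintype.card F = q)
    (h1 : r * (q - 1) < 2 * v) (h2 : 2 * v < (r + 1) * (q - 1)) :
    (∀ x : topIndex q r v,
        (fun x y : topIndex q r v =>
          topEntry F q r v (fun i => (x.1 i : ℕ)) (fun i => (y.1 i : ℕ))) x x
          = (-1 : F) ^ r) ∧
    (∀ x y : topIndex q r v, x ≠ y →
        (fun x y : topIndex q r v =>
          topEntry F q r v (fun i => (x.1 i : ℕ)) (fun i => (y.1 i : ℕ))) x y ≠ 0 →
        ∑ i, (x.1 i : ℕ) = v ∧ ∑ i, (y.1 i : ℕ) = r * (q - 1) - v) ∧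
    IsUnit (Matrix.of (fun x y : topIndex q r v =>
        topEntry F q r v (fun i => (x.1 i : ℕ)) (fun i => (y.1 i : ℕ)))) ∧
    (Matrix.of (fun x y : topIndex q r v =>
        topEntry F q r v (fun i => (x.1 i : ℕ)) (fun i => (y.1 i : ℕ)))).rank =
      Fintype.card (topIndex q r v) := by
  have hdiag := topEntry_self F q r v hq h1
  have hoff := corner_of_topEntry_ne_zero F q r v hq h2
  have hunit : IsUnit (Matrix.of fun x y : topIndex q r v =>
      topEntry F q r v (fun i => (x.1 i : ℕ)) (fun i => (y.1 i : ℕ))) :=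
    Matrix.isUnit_of_diag_eq_of_offDiag_support _ (isUnit_neg_one.pow r)
      (fun x => ∑ i, (x.1 i : ℕ) = v) hdiag
      fun x y hxy h => ⟨(hoff x y hxy h).1, by rw [(hoff x y hxy h).2]; omega⟩
  exact ⟨hdiag, hoff, hunit, Matrix.rank_of_isUnit _ hunit⟩

/-- The top-layer matrix `P`, with entries `⟨ev(M_a), ev(M_{b̄})⟩`, is invertible:
its diagonal entries are `(-1)^r`, its only possible nonzero off-diagonal entries
lie in the corner block from the layer `|a| = U` to the layer `|b| = L`, and
its rank equals `A_r(v)`, the size of the top layer. -/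
theorem topMatrix_invertible (F : Type*) [Field F] [Fintype F] [DecidableEq F]
    (q r v : ℕ) (hq : Fintype.card F = q) (hr : 1 ≤ r)
    (h1 : r * (q - 1) < 2 * v) (h2 : 2 * v < (r + 1) * (q - 1)) :
    (∀ x : topIndex q r v,
        (fun x y : topIndex q r v =>
          topEntry F q r v (fun i => (x.1 i : ℕ)) (fun i => (y.1 i : ℕ))) x x
          = (-1 : F) ^ r) ∧
    (∀ x y : topIndex q r v, x ≠ y →
        (fun x y : topIndex q r v =>
          topEntry F q r v (fun i => (x.1 i : ℕ)) (fun i => (y.1 i : ℕ))) x y ≠ 0 →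
        ∑ i, (x.1 i : ℕ) = v ∧ ∑ i, (y.1 i : ℕ) = r * (q - 1) - v) ∧
    IsUnit (Matrix.of (fun x y : topIndex q r v =>
        topEntry F q r v (fun i => (x.1 i : ℕ)) (fun i => (y.1 i : ℕ)))) ∧
    (Matrix.of (fun x y : topIndex q r v =>
        topEntry F q r v (fun i => (x.1 i : ℕ)) (fun i => (y.1 i : ℕ)))).rank =
      Fintype.card (topIndex q r v) :=
  topMatrix_invertible_general F q r v hq h1 h2
end
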